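/- Standard process tomography fails in real-vector-space quantum theory: there exist two distinct ℝ-linear maps P, P' on 2×2 real symmetric matrices (namely P(M)=(M+Y M Y)/2 and P'(M)=(X M X+Z M Z)/2 restricted to real symmetric matrices, i.e. conjugation maps with real Kraus structure) whose complexifications differ, such that P and P' agree on every real symmetric matrix, yet their canonical extensions P⊗id and P'⊗id to 4×4 matrices differ on the real symmetric matrix |Φ⁺⟩⟨Φ⁺|. -/

import Mathlib

/-!
For every complex `2×2` matrix, `P M - P' M = M - Mᵀ`: the maps differ exactly by
antisymmetrization, which vanishes on symmetric matrices. Tensoring with the identity turns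
the transpose into the partial transpose on the first factor, and `|Φ⁺⟩⟨Φ⁺|` (which the
partial transpose sends to half the swap operator) is not invariant under it.
-/

open Matrix Kronecker

namespace Stmt18

noncomputable def X : Matrix (Fin 2) (Fin 2) ℂ := !![0, 1; 1, 0]
noncomputable def Y : Matrix (Fin 2) (Fin 2) ℂ := !![0, -Complex.I; Complex.I, 0]
noncomputable def Z : Matrix (Fin 2) (Fin 2) ℂ := !![1, 0; 0, -1]

/-- `P(M) = (M + YMY)/2` -/
noncomputable def P (M : Matrix (Fin 2) (Fin 2) ℂ) : Matrix (Fin 2) (Fin 2) ℂ :=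
  ((1 : ℂ)/2) • (M + Y * M * Y)

/-- `P'(M) = (XMX + ZMZ)/2` -/
noncomputable def P' (M : Matrix (Fin 2) (Fin 2) ℂ) : Matrix (Fin 2) (Fin 2) ℂ :=
  ((1 : ℂ)/2) • (X * M * X + Z * M * Z)

/-- `P ⊗ id` on `4×4` matrices. -/
noncomputable def Pext (M : Matrix (Fin 2 × Fin 2) (Fin 2 × Fin 2) ℂ) :
    Matrix (Fin 2 × Fin 2) (Fin 2 × Fin 2) ℂ :=
  ((1 : ℂ)/2) • (M + (Y ⊗ₖ (1 : Matrix (Fin 2) (Fin 2) ℂ)) * M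
      * (Y ⊗ₖ (1 : Matrix (Fin 2) (Fin 2) ℂ)))

/-- `P' ⊗ id` on `4×4` matrices. -/
noncomputable def P'ext (M : Matrix (Fin 2 × Fin 2) (Fin 2 × Fin 2) ℂ) :
    Matrix (Fin 2 × Fin 2) (Fin 2 × Fin 2) ℂ :=
  ((1 : ℂ)/2) • ((X ⊗ₖ (1 : Matrix (Fin 2) (Fin 2) ℂ)) * M
      * (X ⊗ₖ (1 : Matrix (Fin 2) (Fin 2) ℂ))
    + (Z ⊗ₖ (1 : Matrix (Fin 2) (Fin 2) ℂ)) * M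
      * (Z ⊗ₖ (1 : Matrix (Fin 2) (Fin 2) ℂ)))

/-- `|Φ⁺⟩⟨Φ⁺|`, a real symmetric `4×4` matrix with entries `(1/2)δδ`. -/
noncomputable def PhipMat : Matrix (Fin 2 × Fin 2) (Fin 2 × Fin 2) ℂ :=
  Matrix.of fun p q =>
    ((1 : ℂ)/2) * ((if p.1 = p.2 then 1 else 0) * (if q.1 = q.2 then 1 else 0))

theorem kronecker_one_mul_mul_kronecker_one_apply {R m n : Type*} [Semiring R] [Fintype m]
    [Fintype n] [DecidableEq n] (A B : Matrix m m R) (M : Matrix (m × n) (m × n) R)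
    (i j : m) (k l : n) :
    ((A ⊗ₖ (1 : Matrix n n R)) * M * (B ⊗ₖ (1 : Matrix n n R))) (i, k) (j, l) =
      ∑ a, ∑ b, A i a * M (a, k) (b, l) * B b j := by
  simp [mul_apply, Fintype.sum_prod_type, kroneckerMap_apply, one_apply, Finset.sum_mul]
  exact Finset.sum_comm

def partialTransposeLeft {R m n : Type*} (M : Matrix (m × n) (m × n) R) :
    Matrix (m × n) (m × n) R :=
  of fun p q => M (q.1, p.2) (p.1, q.2)

theorem P_sub_P' (M : Matrix (Fin 2) (Fin 2) ℂ) : P M - P' M = M - Mᵀ := by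
  rw [eta_fin_two M]
  ext i j
  fin_cases i <;> fin_cases j <;> simp [P, P', X, Y, Z] <;> ring_nf <;>
    simp only [Complex.I_sq] <;> ring

theorem P_eq_P'_of_transpose_eq {M : Matrix (Fin 2) (Fin 2) ℂ} (hM : Mᵀ = M) : P M = P' M :=
  sub_eq_zero.mp (by rw [P_sub_P', hM, sub_self])

theorem Pext_sub_P'ext (M : Matrix (Fin 2 × Fin 2) (Fin 2 × Fin 2) ℂ) :
    Pext M - P'ext M = M - partialTransposeLeft M := by
  ext ⟨i, k⟩ ⟨j, l⟩
  simp only [Pext, P'ext, Matrix.sub_apply, Matrix.smul_apply, Matrix.add_apply,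
    kronecker_one_mul_mul_kronecker_one_apply, partialTransposeLeft, of_apply]
  fin_cases i <;> fin_cases j <;> simp [X, Y, Z, Fin.sum_univ_two] <;> ring_nf <;>
    simp only [Complex.I_sq] <;> ring

theorem Pext_ne_P'ext_of_partialTransposeLeft_ne {M : Matrix (Fin 2 × Fin 2) (Fin 2 × Fin 2) ℂ}
    (hM : partialTransposeLeft M ≠ M) : Pext M ≠ P'ext M := fun h =>
  hM (sub_eq_zero.mp (by rw [← neg_sub, ← Pext_sub_P'ext, h, sub_self, neg_zero]))

theorem partialTransposeLeft_PhipMat_ne : partialTransposeLeft PhipMat ≠ PhipMat := fun h => by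
  simpa [partialTransposeLeft, PhipMat] using congrFun (congrFun h (0, 0)) (1, 1)

/-- Standard process tomography fails in real-vector-space quantum theory:
`P` and `P'` agree on every real symmetric `2×2` matrix, yet `P⊗id` and
`P'⊗id` differ on the real symmetric matrix `|Φ⁺⟩⟨Φ⁺|`. -/
theorem standard_tomography_fails :
    (∀ M : Matrix (Fin 2) (Fin 2) ℂ,
        (∀ i j, (M i j).im = 0) → Mᵀ = M → P M = P' M) ∧
    Pext PhipMat ≠ P'ext PhipMat :=
  ⟨fun _ _ hM => P_eq_P'_of_transpose_eq hM,
    Pext_ne_P'ext_of_partialTransposeLeft_ne partialTransposeLeft_PhipMat_ne⟩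

end Stmt18
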